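/- The group Σ(36×3) = ⟨C, E, V⟩ ≤ GL(3,ℂ) has order 108, contains Δ(54) = ⟨C, E, V²⟩ as a normal subgroup of index 2, and has exactly 14 conjugacy classes. -/

import Mathlib

/-!
Put `z = ⁅e, c⁆`, the scalar matrix `ω`. The relations `e c e⁻¹ = z c`, `c³ = 1`, `v c v⁻¹ = e`,
`v e v⁻¹ = c²`, `v⁴ = 1` and `z` central give a surjection onto `⟨c, e, v⟩` from `H ⋊ ℤ/4`,
where `H` is the Heisenberg group of order 27 over `𝔽₃` and `ℤ/4` acts as conjugation by `v`.
It is injective: a nontrivial normal subgroup of `H` contains a nontrivial power of `z`, and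
`z ≠ 1`; and since `H` has exponent 3, `v ^ k ∈ H` forces `v ^ (3 * k) = 1`, so `4 ∣ k` because
`v² ≠ 1`. `Δ(54)` is the image of the index-two subgroup where the `ℤ/4`-coordinate is even, and
the 14 classes are counted in the model through its `14 · 108` commuting pairs.
-/

open Matrix

noncomputable def ω : ℂ := Complex.exp (2 * Real.pi * Complex.I / 3)

noncomputable def Cmat : Matrix (Fin 3) (Fin 3) ℂ := !![1,0,0; 0,ω,0; 0,0,ω^2]

noncomputable def Emat : Matrix (Fin 3) (Fin 3) ℂ := !![0,1,0; 0,0,1; 1,0,0]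

noncomputable def Vmat : Matrix (Fin 3) (Fin 3) ℂ :=
  (1 / ((Real.sqrt 3 : ℂ) * Complex.I)) • !![1,1,1; 1,ω,ω^2; 1,ω^2,ω]

noncomputable def Xmat : Matrix (Fin 3) (Fin 3) ℂ :=
  (1 / ((Real.sqrt 3 : ℂ) * Complex.I)) • !![1,1,ω^2; 1,ω,ω; ω,1,ω]

noncomputable def ε : ℂ := Complex.exp (4 * Real.pi * Complex.I / 9)

noncomputable def Dmat : Matrix (Fin 3) (Fin 3) ℂ := !![ε,0,0; 0,ε,0; 0,0,ε*ω]

lemma pow_val_add {M : Type*} [Monoid M] {n : ℕ} [NeZero n] {a : M} (ha : a ^ n = 1)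
    (k l : ZMod n) : a ^ (k + l).val = a ^ k.val * a ^ l.val := by
  rw [ZMod.val_add, ← pow_eq_pow_mod _ ha, pow_add]

lemma pow_val_mul {M : Type*} [Monoid M] {n : ℕ} [NeZero n] {a : M} (ha : a ^ n = 1)
    (k l : ZMod n) : a ^ (k * l).val = a ^ (k.val * l.val) := by
  rw [ZMod.val_mul, ← pow_eq_pow_mod _ ha]

def zmodPowHom {M : Type*} [Monoid M] {n : ℕ} [NeZero n] {a : M} (ha : a ^ n = 1) :
    Multiplicative (ZMod n) →* M where
  toFun k := a ^ k.toAdd.val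
  map_one' := by simp
  map_mul' k l := pow_val_add ha k.toAdd l.toAdd

lemma MulEquiv.natCard_conjClasses {G H : Type*} [Group G] [Group H] (f : G ≃* H) :
    Nat.card (ConjClasses G) = Nat.card (ConjClasses H) :=
  Nat.card_congr <| Quotient.congr f.toEquiv fun a b => show IsConj a b ↔ IsConj (f a) (f b) from
    ⟨f.toMonoidHom.map_isConj, fun h => by convert f.symm.toMonoidHom.map_isConj h <;> simp⟩

open scoped commutatorElement

section CentralCommutator

variable {G : Type*} [Group G] {z c e : G}

lemma conj_pow_pow_eq_of_conj_eq (hz : z ∈ Subgroup.center G) (hec : e * c * e⁻¹ = z * c)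
    (m n : ℕ) : e ^ m * c ^ n * (e ^ m)⁻¹ = z ^ (m * n) * c ^ n := by
  have hzm : ∀ k : ℕ, z ^ k ∈ Subgroup.center G := Subgroup.pow_mem _ hz
  have hc : ∀ m : ℕ, MulAut.conj (e ^ m) c = z ^ m * c := by
    intro m
    induction m with
    | zero => simp
    | succ m ih =>
      rw [pow_succ', map_mul, MulAut.mul_apply, ih, map_mul, MulAut.conj_apply, MulAut.conj_apply,
        hec, Subgroup.mem_center_iff.mp (hzm m), mul_inv_cancel_right, pow_succ, mul_assoc]
  have hcomm : Commute (z ^ m) c := (Subgroup.mem_center_iff.mp (hzm m) c).symm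
  rw [← MulAut.conj_apply, map_pow, hc, hcomm.mul_pow, pow_mul]

lemma pow_mul_pow_eq_of_conj_eq (hz : z ∈ Subgroup.center G) (hec : e * c * e⁻¹ = z * c)
    (m n : ℕ) : e ^ m * c ^ n = z ^ (m * n) * c ^ n * e ^ m :=
  mul_inv_eq_iff_eq_mul.mp (conj_pow_pow_eq_of_conj_eq hz hec m n)

lemma pow_three_eq_one_of_conj_eq (hz : z ∈ Subgroup.center G) (hec : e * c * e⁻¹ = z * c)
    (hc3 : c ^ 3 = 1) : z ^ 3 = 1 := by
  simpa [hc3] using (conj_pow_pow_eq_of_conj_eq hz hec 1 3).symm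

end CentralCommutator

/-- The Heisenberg group over `ZMod 3`; `⟨x, y, w⟩` stands for the word `z ^ x * c ^ y * e ^ w`
in generators with `e * c * e⁻¹ = z * c` and `z` central. -/
@[ext] structure Heis3 where
  x : ZMod 3
  y : ZMod 3
  w : ZMod 3
  deriving DecidableEq, Fintype

namespace Heis3

instance : Mul Heis3 := ⟨fun h h' => ⟨h.x + h'.x + h.w * h'.y, h.y + h'.y, h.w + h'.w⟩⟩
instance : One Heis3 := ⟨⟨0, 0, 0⟩⟩
instance : Inv Heis3 := ⟨fun h => ⟨-h.x + h.w * h.y, -h.y, -h.w⟩⟩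

@[simp] lemma mul_x (h h' : Heis3) : (h * h').x = h.x + h'.x + h.w * h'.y := rfl
@[simp] lemma mul_y (h h' : Heis3) : (h * h').y = h.y + h'.y := rfl
@[simp] lemma mul_w (h h' : Heis3) : (h * h').w = h.w + h'.w := rfl
@[simp] lemma one_x : (1 : Heis3).x = 0 := rfl
@[simp] lemma one_y : (1 : Heis3).y = 0 := rfl
@[simp] lemma one_w : (1 : Heis3).w = 0 := rfl
@[simp] lemma inv_x (h : Heis3) : h⁻¹.x = -h.x + h.w * h.y := rfl
@[simp] lemma inv_y (h : Heis3) : h⁻¹.y = -h.y := rfl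
@[simp] lemma inv_w (h : Heis3) : h⁻¹.w = -h.w := rfl

instance : Group Heis3 :=
  Group.ofLeftAxioms (fun _ _ _ => by ext <;> simp <;> ring) (fun _ => by ext <;> simp)
    (fun _ => by ext <;> simp)

lemma pow_three (h : Heis3) : h ^ 3 = 1 := by
  ext <;> simp [pow_succ] <;> ring_nf <;> reduce_mod_char

lemma commutator_y (h : Heis3) : ⁅h, (⟨0, 1, 0⟩ : Heis3)⁆ = ⟨h.w, 0, 0⟩ := by
  ext <;> simp [commutatorElement_def]; ring

lemma commutator_w (h : Heis3) : ⁅h, (⟨0, 0, 1⟩ : Heis3)⁆ = ⟨-h.y, 0, 0⟩ := by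
  ext <;> simp [commutatorElement_def]; ring

/-- Conjugation by the order-four generator `v`, which maps `c ↦ e` and `e ↦ c ^ 2`. -/
def twist : MulAut Heis3 where
  toFun h := ⟨h.x + 2 * h.w * h.y, 2 * h.w, h.y⟩
  invFun h := ⟨h.x + 2 * h.w * h.y, h.w, 2 * h.y⟩
  left_inv h := by ext <;> simp <;> ring_nf <;> reduce_mod_char
  right_inv h := by ext <;> simp <;> ring_nf <;> reduce_mod_char
  map_mul' h h' := by ext <;> simp <;> ring_nf; reduce_mod_char

lemma twist_pow_four : twist ^ 4 = 1 := by
  ext h <;> simp [pow_succ, twist] <;> ring_nf <;> reduce_mod_char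

variable {G : Type*} [Group G] {z c e : G} (hz : z ∈ Subgroup.center G)
  (hec : e * c * e⁻¹ = z * c) (hc3 : c ^ 3 = 1) (he3 : e ^ 3 = 1)

def lift : Heis3 →* G where
  toFun h := z ^ h.x.val * c ^ h.y.val * e ^ h.w.val
  map_one' := by simp
  map_mul' h h' := by
    have hz3 := pow_three_eq_one_of_conj_eq hz hec hc3
    have hzl : ∀ k g x, g * (z ^ k * x) = z ^ k * (g * x) := fun k g x => by
      rw [← mul_assoc, ← mul_assoc, Subgroup.mem_center_iff.mp (Subgroup.pow_mem _ hz k) g]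
    simp only [mul_x, mul_y, mul_w, pow_val_add hz3, pow_val_mul hz3, pow_val_add hc3,
      pow_val_add he3, mul_assoc]
    rw [hzl _ (e ^ h.w.val), hzl _ (c ^ h.y.val), ← mul_assoc (e ^ h.w.val),
      pow_mul_pow_eq_of_conj_eq hz hec]
    simp only [mul_assoc, hzl _ (c ^ h.y.val)]

@[simp] lemma lift_apply (h : Heis3) :
    lift hz hec hc3 he3 h = z ^ h.x.val * c ^ h.y.val * e ^ h.w.val := rfl

lemma lift_injective (hz1 : z ≠ 1) : Function.Injective (lift hz hec hc3 he3) := by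
  have hz3 := pow_three_eq_one_of_conj_eq hz hec hc3
  have hcentral : ∀ k : ZMod 3, lift hz hec hc3 he3 ⟨k, 0, 0⟩ = 1 → k = 0 := by
    intro k hk
    have h3 : orderOf z ∣ k.val := orderOf_dvd_of_pow_eq_one (by simpa using hk)
    rw [orderOf_eq_prime hz3 hz1] at h3
    have := ZMod.val_lt k
    exact (ZMod.val_eq_zero k).mp (by omega)
  rw [injective_iff_map_eq_one]
  intro h hh
  have hcomm : ∀ g, lift hz hec hc3 he3 ⁅h, g⁆ = 1 := fun g => by
    rw [map_commutatorElement, hh, commutatorElement_one_left]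
  have hw := hcentral _ (commutator_y h ▸ hcomm _)
  have hy := neg_eq_zero.mp (hcentral _ (commutator_w h ▸ hcomm _))
  have hx := hcentral h.x (by rw [← hh]; congr 1; ext <;> simp [hw, hy])
  ext <;> simp [hx, hy, hw]

lemma lift_twist {v : G} (hvc : v * c * v⁻¹ = e) (hve : v * e * v⁻¹ = c ^ 2) (h : Heis3) :
    lift hz hec hc3 he3 (twist h) = v * lift hz hec hc3 he3 h * v⁻¹ := by
  have hvz : v * z * v⁻¹ = z := by rw [Subgroup.mem_center_iff.mp hz v, mul_inv_cancel_right]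
  have htwist : twist h = ⟨h.x, 0, 0⟩ * ⟨0, 0, h.y⟩ * ⟨0, 2 * h.w, 0⟩ := by
    ext <;> simp [twist]; ring
  rw [htwist, map_mul, map_mul, ← MulAut.conj_apply, lift_apply (h := h), map_mul, map_mul,
    map_pow, map_pow, map_pow, MulAut.conj_apply, MulAut.conj_apply, MulAut.conj_apply, hvz, hvc,
    hve]
  simp [pow_val_mul hc3, ← pow_mul, show (2 : ZMod 3).val = 2 from rfl]

end Heis3

abbrev Sigma36x3 := Heis3 ⋊[zmodPowHom Heis3.twist_pow_four] Multiplicative (ZMod 4)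

namespace Sigma36x3

instance : Fintype Sigma36x3 := Fintype.ofEquiv _ SemidirectProduct.equivProd.symm

instance : DecidableRel (Commute : Sigma36x3 → Sigma36x3 → Prop) :=
  fun a b => inferInstanceAs (Decidable (a * b = b * a))

lemma card : Nat.card Sigma36x3 = 108 := by
  rw [SemidirectProduct.card, Nat.card_eq_fintype_card, Nat.card_eq_fintype_card]
  rfl

lemma card_conjClasses : Nat.card (ConjClasses Sigma36x3) = 14 := by
  have hcomm : Nat.card {p : Sigma36x3 × Sigma36x3 // Commute p.1 p.2} = 14 * 108 := by
    rw [Nat.card_eq_fintype_card]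
    decide +kernel
  rw [card_comm_eq_card_conjClasses_mul_card, card] at hcomm
  omega


def parity : Sigma36x3 →* Multiplicative (ZMod 2) :=
  (ZMod.castHom (by norm_num : 2 ∣ 4) (ZMod 2)).toAddMonoidHom.toMultiplicative.comp
    SemidirectProduct.rightHom

lemma mem_ker_parity (t : Sigma36x3) : t ∈ parity.ker ↔ t.right = 1 ∨ t.right = .ofAdd 2 := by
  rw [MonoidHom.mem_ker]
  change (ZMod.castHom (by norm_num : 2 ∣ 4) (ZMod 2)).toAddMonoidHom.toMultiplicative t.right = 1
    ↔ _
  generalize t.right = g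
  revert g
  decide

lemma index_ker_parity : parity.ker.index = 2 := by
  have hsurj : Function.Surjective parity := by decide
  rw [Subgroup.index_ker, MonoidHom.range_eq_top.mpr hsurj, Subgroup.card_top,
    Nat.card_eq_fintype_card]
  rfl

variable {G : Type*} [Group G]

structure Relations (z c e v : G) : Prop where
  center : z ∈ Subgroup.center G
  conj_e_c : e * c * e⁻¹ = z * c
  c_pow_three : c ^ 3 = 1
  conj_v_c : v * c * v⁻¹ = e
  conj_v_e : v * e * v⁻¹ = c ^ 2
  v_pow_four : v ^ 4 = 1

namespace Relations

variable {z c e v : G} (hR : Relations z c e v)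
include hR

lemma e_pow_three : e ^ 3 = 1 := by
  rw [← hR.conj_v_c, conj_pow, hR.c_pow_three, mul_one, mul_inv_cancel]

def heisLift : Heis3 →* G :=
  Heis3.lift hR.center hR.conj_e_c hR.c_pow_three hR.e_pow_three

lemma heisLift_mem {H : Subgroup G} (hc : c ∈ H) (he : e ∈ H) (h : Heis3) :
    hR.heisLift h ∈ H := by
  have hz : z ∈ H := by
    rw [eq_mul_inv_of_mul_eq hR.conj_e_c.symm]
    exact mul_mem (mul_mem (mul_mem he hc) (inv_mem he)) (inv_mem hc)
  exact mul_mem (mul_mem (pow_mem hz _) (pow_mem hc _)) (pow_mem he _)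

lemma heisLift_twist_pow (n : ℕ) (h : Heis3) :
    hR.heisLift ((Heis3.twist ^ n) h) = v ^ n * hR.heisLift h * (v ^ n)⁻¹ := by
  induction n with
  | zero => simp
  | succ n ih =>
    rw [pow_succ', MulAut.mul_apply, heisLift, Heis3.lift_twist _ _ _ _ hR.conj_v_c hR.conj_v_e]
    rw [heisLift] at ih
    rw [ih]
    group

def lift : Sigma36x3 →* G :=
  SemidirectProduct.lift hR.heisLift (zmodPowHom hR.v_pow_four) fun g =>
    MonoidHom.ext fun h => hR.heisLift_twist_pow g.toAdd.val h

lemma lift_apply (t : Sigma36x3) : hR.lift t = hR.heisLift t.left * v ^ t.right.toAdd.val := rfl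

lemma lift_injective (hz1 : z ≠ 1) (hv2 : v ^ 2 ≠ 1) : Function.Injective hR.lift := by
  rw [injective_iff_map_eq_one]
  rintro ⟨h, g⟩ hh
  rw [lift_apply] at hh
  have hv : v ^ g.toAdd.val = hR.heisLift h⁻¹ := by
    rw [map_inv]; exact eq_inv_of_mul_eq_one_right hh
  have hv4 : orderOf v = 2 ^ 2 := orderOf_eq_prime_pow (by simpa using hv2) hR.v_pow_four
  have h4 : 2 ^ 2 ∣ g.toAdd.val * 3 := hv4 ▸ orderOf_dvd_of_pow_eq_one
    (by rw [pow_mul, hv, ← map_pow, Heis3.pow_three, map_one])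
  have hg : g = 1 := by
    have := ZMod.val_lt g.toAdd
    exact toAdd_eq_zero.mp ((ZMod.val_eq_zero _).mp (by omega))
  subst hg
  have hlift : hR.heisLift h = 1 := by simpa using hh
  rw [Heis3.lift_injective _ _ _ _ hz1 (hlift.trans (map_one _).symm)]
  rfl

lemma range_lift : hR.lift.range = Subgroup.closure {c, e, v} := by
  have hc : c ∈ Subgroup.closure {c, e, v} := Subgroup.subset_closure (by simp)
  have he : e ∈ Subgroup.closure {c, e, v} := Subgroup.subset_closure (by simp)
  have hv : v ∈ Subgroup.closure {c, e, v} := Subgroup.subset_closure (by simp)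
  refine le_antisymm ?_ ?_
  · rintro _ ⟨t, rfl⟩
    exact mul_mem (hR.heisLift_mem hc he _) (pow_mem hv _)
  · rw [Subgroup.closure_le]
    rintro _ (rfl | rfl | rfl)
    · exact ⟨⟨⟨0, 1, 0⟩, 1⟩, by simp [lift_apply, heisLift, ZMod.val_one]⟩
    · exact ⟨⟨⟨0, 0, 1⟩, 1⟩, by simp [lift_apply, heisLift, ZMod.val_one]⟩
    · exact ⟨⟨1, .ofAdd 1⟩,
        by simp [lift_apply, heisLift, show (1 : ZMod 4).val = 1 from rfl]⟩

lemma map_lift_ker_parity :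
    parity.ker.map hR.lift = Subgroup.closure {c, e, v ^ 2} := by
  have hc : c ∈ Subgroup.closure {c, e, v ^ 2} := Subgroup.subset_closure (by simp)
  have he : e ∈ Subgroup.closure {c, e, v ^ 2} := Subgroup.subset_closure (by simp)
  have hv : v ^ 2 ∈ Subgroup.closure {c, e, v ^ 2} := Subgroup.subset_closure (by simp)
  refine le_antisymm ?_ ?_
  · rintro _ ⟨⟨h, g⟩, hg, rfl⟩
    refine mul_mem (hR.heisLift_mem hc he _) ?_
    rcases (mem_ker_parity _).mp hg with rfl | rfl
    · simp
    · exact hv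
  · rw [Subgroup.closure_le]
    rintro _ (rfl | rfl | rfl)
    · exact ⟨⟨⟨0, 1, 0⟩, 1⟩, (mem_ker_parity _).mpr (.inl rfl),
        by simp [lift_apply, heisLift, ZMod.val_one]⟩
    · exact ⟨⟨⟨0, 0, 1⟩, 1⟩, (mem_ker_parity _).mpr (.inl rfl),
        by simp [lift_apply, heisLift, ZMod.val_one]⟩
    · exact ⟨⟨1, .ofAdd 2⟩, (mem_ker_parity _).mpr (.inr rfl),
        by simp [lift_apply, heisLift]; rfl⟩

end Relations

end Sigma36x3

noncomputable def Fmat : Matrix (Fin 3) (Fin 3) ℂ := !![1,1,1; 1,ω,ω^2; 1,ω^2,ω]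

lemma isPrimitiveRoot_omega : IsPrimitiveRoot ω 3 := by
  simpa [ω] using Complex.isPrimitiveRoot_exp 3 (by norm_num)

lemma omega_cube : ω ^ 3 = 1 := isPrimitiveRoot_omega.pow_eq_one

lemma omega_sq_add_omega_add_one : ω ^ 2 + ω + 1 = 0 := by
  have h := isPrimitiveRoot_omega.geom_sum_eq_zero (by norm_num)
  simp only [Finset.sum_range_succ, Finset.sum_range_zero] at h
  linear_combination h

lemma Cmat_mul_Emat : Emat * Cmat = ω • (Cmat * Emat) := by
  ext i j
  fin_cases i <;> fin_cases j <;> simp [Cmat, Emat, Matrix.mul_apply, Fin.sum_univ_three] <;>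
    grind [omega_cube]

lemma Cmat_pow_three : Cmat ^ 3 = 1 := by
  ext i j
  fin_cases i <;> fin_cases j <;>
    simp [Cmat, pow_succ, Matrix.mul_apply, Fin.sum_univ_three] <;> grind [omega_cube]

lemma Fmat_mul_Cmat : Fmat * Cmat = Emat * Fmat := by
  ext i j
  fin_cases i <;> fin_cases j <;>
    simp [Fmat, Cmat, Emat, Matrix.mul_apply, Fin.sum_univ_three] <;> grind [omega_cube]

lemma Fmat_mul_Emat : Fmat * Emat = Cmat ^ 2 * Fmat := by
  ext i j
  fin_cases i <;> fin_cases j <;>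
    simp [Fmat, Cmat, Emat, sq, Matrix.mul_apply, Fin.sum_univ_three] <;> grind [omega_cube]

lemma Fmat_sq : Fmat ^ 2 = (3 : ℂ) • !![1,0,0; 0,0,1; 0,1,0] := by
  ext i j
  fin_cases i <;> fin_cases j <;> simp [Fmat, sq, Matrix.mul_apply, Fin.sum_univ_three] <;>
    grind [omega_cube, omega_sq_add_omega_add_one]

lemma Vmat_eq : Vmat = (1 / ((Real.sqrt 3 : ℂ) * Complex.I)) • Fmat := rfl

lemma Vmat_mul_Cmat : Vmat * Cmat = Emat * Vmat := by
  rw [Vmat_eq, smul_mul_assoc, Fmat_mul_Cmat, mul_smul_comm]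

lemma Vmat_mul_Emat : Vmat * Emat = Cmat ^ 2 * Vmat := by
  rw [Vmat_eq, smul_mul_assoc, Fmat_mul_Emat, mul_smul_comm]

lemma Vmat_sq : Vmat ^ 2 = -!![1,0,0; 0,0,1; 0,1,0] := by
  have hs : ((Real.sqrt 3 : ℂ) * Complex.I) ^ 2 = -3 := by
    rw [mul_pow, ← Complex.ofReal_pow, Real.sq_sqrt (by norm_num)]
    simp
  rw [Vmat_eq, smul_pow, Fmat_sq, smul_smul, div_pow, hs]
  ext i j
  fin_cases i <;> fin_cases j <;> simp

lemma Vmat_pow_four : Vmat ^ 4 = 1 := by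
  rw [show 4 = 2 * 2 from rfl, pow_mul, Vmat_sq]
  ext i j
  fin_cases i <;> fin_cases j <;> simp [sq, Matrix.mul_apply, Fin.sum_univ_three]

section Generators

variable {c e v : GL (Fin 3) ℂ}

lemma coe_commutator_eq_omega_smul (hc : (c : Matrix (Fin 3) (Fin 3) ℂ) = Cmat)
    (he : (e : Matrix (Fin 3) (Fin 3) ℂ) = Emat) :
    ((⁅e, c⁆ : GL (Fin 3) ℂ) : Matrix (Fin 3) (Fin 3) ℂ) = ω • 1 := by
  have hec : ((e * c : GL (Fin 3) ℂ) : Matrix (Fin 3) (Fin 3) ℂ) =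
      ω • ((c * e : GL (Fin 3) ℂ) : Matrix (Fin 3) (Fin 3) ℂ) := by
    simp [hc, he, Cmat_mul_Emat]
  rw [show ⁅e, c⁆ = e * c * (c * e)⁻¹ by group, Units.val_mul, hec, smul_mul_assoc,
    Units.mul_inv]

lemma sigma36x3_relations (hc : (c : Matrix (Fin 3) (Fin 3) ℂ) = Cmat)
    (he : (e : Matrix (Fin 3) (Fin 3) ℂ) = Emat) (hv : (v : Matrix (Fin 3) (Fin 3) ℂ) = Vmat) :
    Sigma36x3.Relations ⁅e, c⁆ c e v where
  center := Subgroup.mem_center_iff.mpr fun g => Units.ext <| by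
    simp [coe_commutator_eq_omega_smul hc he]
  conj_e_c := by group
  c_pow_three := Units.ext <| by simp [hc, Cmat_pow_three]
  conj_v_c := mul_inv_eq_of_eq_mul <| Units.ext <| by simp [hc, he, hv, Vmat_mul_Cmat]
  conj_v_e := mul_inv_eq_of_eq_mul <| Units.ext <| by simp [hc, he, hv, Vmat_mul_Emat]
  v_pow_four := Units.ext <| by simp [hv, Vmat_pow_four]

lemma commutator_ne_one_of_coe_eq (hc : (c : Matrix (Fin 3) (Fin 3) ℂ) = Cmat)
    (he : (e : Matrix (Fin 3) (Fin 3) ℂ) = Emat) : ⁅e, c⁆ ≠ 1 := fun h => by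
  have h00 := congrArg (fun g : GL (Fin 3) ℂ => (g : Matrix (Fin 3) (Fin 3) ℂ) 0 0) h
  simp only [coe_commutator_eq_omega_smul hc he, Units.val_one] at h00
  exact isPrimitiveRoot_omega.ne_one (by norm_num) (by simpa using h00)

lemma sq_ne_one_of_coe_eq_Vmat (hv : (v : Matrix (Fin 3) (Fin 3) ℂ) = Vmat) :
    v ^ 2 ≠ 1 := fun h => by
  have h00 := congrArg (fun g : GL (Fin 3) ℂ => (g : Matrix (Fin 3) (Fin 3) ℂ) 0 0) h
  simp only [Units.val_pow_eq_pow_val, hv, Vmat_sq, Units.val_one] at h00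
  norm_num at h00

end Generators

/-- Σ(36×3) = ⟨C,E,V⟩ has order 108, contains Δ(54) = ⟨C,E,V²⟩ as a normal
subgroup of index 2, and has exactly 14 conjugacy classes. -/
theorem stmt_13 (c e v : GL (Fin 3) ℂ)
    (hc : (c : Matrix (Fin 3) (Fin 3) ℂ) = Cmat)
    (he : (e : Matrix (Fin 3) (Fin 3) ℂ) = Emat)
    (hv : (v : Matrix (Fin 3) (Fin 3) ℂ) = Vmat) :
    Nat.card (Subgroup.closure {c, e, v}) = 108 ∧
    Subgroup.closure {c, e, v ^ 2} ≤ Subgroup.closure {c, e, v} ∧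
    (∀ g ∈ Subgroup.closure {c, e, v}, ∀ x ∈ Subgroup.closure {c, e, v ^ 2},
        g * x * g⁻¹ ∈ Subgroup.closure {c, e, v ^ 2}) ∧
    (Subgroup.closure {c, e, v ^ 2}).relIndex (Subgroup.closure {c, e, v}) = 2 ∧
    Nat.card (ConjClasses (Subgroup.closure {c, e, v})) = 14 := by
  have hR := sigma36x3_relations hc he hv
  have hinj :=
    hR.lift_injective (commutator_ne_one_of_coe_eq hc he) (sq_ne_one_of_coe_eq_Vmat hv)
  have hiso := MonoidHom.ofInjective hinj
  rw [← hR.range_lift, ← hR.map_lift_ker_parity]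
  refine ⟨?_, Subgroup.map_le_range _ _, ?_, ?_, ?_⟩
  · rw [← Nat.card_congr hiso.toEquiv, Sigma36x3.card]
  · rintro _ ⟨t, rfl⟩ _ ⟨s, hs, rfl⟩
    exact ⟨t * s * t⁻¹, Subgroup.Normal.conj_mem inferInstance s hs t, by simp⟩
  · rw [MonoidHom.range_eq_map, Subgroup.relIndex_map_map_of_injective _ _ hinj,
      Subgroup.relIndex_top_right, Sigma36x3.index_ker_parity]
  · rw [← hiso.natCard_conjClasses, Sigma36x3.card_conjClasses]
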